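/- Let κ > 0, τ > 0, ℓ > 0 with τ² > κ² + ℓ²/3, and consider Ĥ(s) = (τ²s + ℓ√(1+κ²s²))/(τ²s² + sℓ√(1+κ²s²) + 1) on ℂ₀ = {Re s > 0}. Then Ĥ belongs to the Hardy space H²(ℂ₀): it is holomorphic on ℂ₀ and sup_{α>0} ∫_ℝ |Ĥ(α + iξ)|² dξ < ∞. -/

import Mathlib

/-!
Write `Ĥ = N / D`. On `Re s > 0` the principal square root `root` has nonnegative real part, so
`Re (D s * conj s) = |s|² (τ² Re s + ℓ Re root) + Re s > 0` and `D` has no zeros: `Ĥ` is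
holomorphic. On the imaginary axis `D` does not vanish either, since `κ² < τ²` and `ℓ > 0`, so by
compactness `Ĥ` is bounded near `0`; for large `|s|` the leading term `τ² s²` of `D` dominates
because `ℓ |κ| < τ²`, giving `|Ĥ s| = O(1/|s|)`. Hence `|Ĥ (α + iξ)|² ≤ M / (1 + ξ²)` uniformly in
`α > 0`, and `∫ (1 + ξ²)⁻¹ = π`.
-/

open MeasureTheory

/-- The transfer function of the linear dispersive Cummins equation. -/
noncomputable def Hhat (κ τ ℓ : ℝ) (s : ℂ) : ℂ :=
  ((τ : ℂ) ^ 2 * s + (ℓ : ℂ) * (((1 : ℂ) + (κ : ℂ) ^ 2 * s ^ 2) ^ ((1 : ℂ) / 2))) /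
    ((τ : ℂ) ^ 2 * s ^ 2 + s * (ℓ : ℂ) * (((1 : ℂ) + (κ : ℂ) ^ 2 * s ^ 2) ^ ((1 : ℂ) / 2)) + 1)

open Complex ComplexConjugate

namespace Complex

theorem sq_sqrt (z : ℂ) : sqrt z ^ 2 = z := by
  simp [Complex.sqrt]

theorem norm_sqrt (z : ℂ) : ‖sqrt z‖ = √‖z‖ := by
  rw [Complex.sqrt, show (2⁻¹ : ℂ) = ((2⁻¹ : ℝ) : ℂ) by push_cast; rfl, norm_cpow_real,
    Real.sqrt_eq_rpow, one_div]

theorem re_sqrt_nonneg (z : ℂ) : 0 ≤ (sqrt z).re := by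
  rw [Complex.sqrt, cpow_inv_two_re]
  positivity

theorem im_sqrt_nonneg {z : ℂ} (hz : 0 ≤ z.im) : 0 ≤ (sqrt z).im := by
  rw [Complex.sqrt, cpow_inv_two_im_eq_sqrt hz]
  positivity

theorem sqrt_conj {z : ℂ} (hz : z.arg ≠ Real.pi) : sqrt (conj z) = conj (sqrt z) := by
  rw [Complex.sqrt, Complex.sqrt, conj_cpow _ _ hz, map_inv₀, map_ofNat]

theorem continuousOn_sqrt_of_im_nonneg : ContinuousOn sqrt {z : ℂ | 0 ≤ z.im} := by
  intro z hz
  by_cases! h : 0 ≤ z.re ∨ z.im ≠ 0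
  · exact (continuousAt_sqrt h).continuousWithinAt
  have hz0 : z ≠ 0 := fun h0 => by simp [h0] at h
  -- on the negative real axis, `log` is continuous from above
  have hexp : ContinuousWithinAt (fun u => exp (log u / 2)) {z | 0 ≤ z.im} z :=
    continuous_exp.continuousAt.comp_continuousWithinAt
      ((continuousWithinAt_log_of_re_neg_of_im_zero h.1 h.2).div_const 2)
  refine hexp.congr_of_eventuallyEq ?_ (sqrt_eq_exp hz0)
  filter_upwards [eventually_nhdsWithin_of_eventually_nhds (eventually_ne_nhds hz0)]
    with u hu using sqrt_eq_exp hu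

end Complex

namespace Hhat

variable {κ τ ℓ : ℝ} {s : ℂ}

noncomputable def root (κ : ℝ) (s : ℂ) : ℂ := sqrt (1 + (κ : ℂ) ^ 2 * s ^ 2)

noncomputable def num (κ τ ℓ : ℝ) (s : ℂ) : ℂ := (τ : ℂ) ^ 2 * s + ℓ * root κ s

noncomputable def den (κ τ ℓ : ℝ) (s : ℂ) : ℂ := (τ : ℂ) ^ 2 * s ^ 2 + s * ℓ * root κ s + 1

theorem eq_num_div_den (κ τ ℓ : ℝ) : Hhat κ τ ℓ = fun s => num κ τ ℓ s / den κ τ ℓ s := by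
  ext s
  simp only [Hhat, num, den, root, Complex.sqrt, one_div]

theorem one_add_sq_mul_sq_mem_slitPlane (κ : ℝ) (hs : 0 < s.re) :
    1 + (κ : ℂ) ^ 2 * s ^ 2 ∈ slitPlane := by
  rw [mem_slitPlane_iff]
  simp only [pow_two, add_re, add_im, mul_re, mul_im, one_re, one_im, ofReal_re, ofReal_im]
  by_cases hκs : κ * s.im = 0
  · left; nlinarith [sq_nonneg (κ * s.re)]
  · right
    have hκ : κ ≠ 0 := left_ne_zero_of_mul hκs
    have him : s.im ≠ 0 := right_ne_zero_of_mul hκs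
    ring_nf
    positivity

theorem re_den_mul_conj (κ τ ℓ : ℝ) (s : ℂ) :
    (den κ τ ℓ s * conj s).re = normSq s * (τ ^ 2 * s.re + ℓ * (root κ s).re) + s.re := by
  have h : den κ τ ℓ s * conj s
      = (normSq s : ℂ) * (((τ ^ 2 : ℝ) : ℂ) * s + (ℓ : ℂ) * root κ s) + conj s := by
    rw [← mul_conj, den]
    push_cast
    ring
  rw [h, add_re, re_ofReal_mul, add_re, re_ofReal_mul, re_ofReal_mul, conj_re]

theorem den_ne_zero_of_re_pos (hℓ : 0 ≤ ℓ) (hs : 0 < s.re) : den κ τ ℓ s ≠ 0 := by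
  intro h0
  have h := re_den_mul_conj κ τ ℓ s
  rw [h0, zero_mul, zero_re] at h
  have hroot : 0 ≤ (root κ s).re := re_sqrt_nonneg _
  have : 0 ≤ normSq s * (τ ^ 2 * s.re + ℓ * (root κ s).re) :=
    mul_nonneg (normSq_nonneg s) (by positivity)
  linarith

theorem differentiableOn (hℓ : 0 ≤ ℓ) : DifferentiableOn ℂ (Hhat κ τ ℓ) {s : ℂ | 0 < s.re} := by
  intro s (hs : 0 < s.re)
  have hroot : DifferentiableAt ℂ (root κ) s :=
    (differentiableAt_sqrt (one_add_sq_mul_sq_mem_slitPlane κ hs)).comp s (by fun_prop)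
  rw [eq_num_div_den]
  refine DifferentiableAt.differentiableWithinAt (.div ?_ ?_ (den_ne_zero_of_re_pos hℓ hs))
  · unfold num; fun_prop
  · unfold den; fun_prop

theorem den_ofReal_mul_I_ne_zero (hℓ : 0 < ℓ) (hκτ : κ ^ 2 < τ ^ 2) {y : ℝ} (hy : 0 ≤ y) :
    den κ τ ℓ (y * I) ≠ 0 := by
  -- a zero forces `root (iy) = ib` with `b ≥ 0` and `b² = κ²y² - 1`, so `τ²y² > 1` and the real
  -- part `1 - τ²y² - ℓyb` of `den (iy)` is negative
  set v := root κ (y * I) with hv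
  have hv2 : v ^ 2 = 1 - (κ * y : ℂ) ^ 2 := by
    rw [hv, root, sq_sqrt]; ring_nf; rw [I_sq]; ring
  have hvim : 0 ≤ v.im := im_sqrt_nonneg (by simp [sq])
  have hre := congrArg re hv2
  simp only [sq, mul_re, sub_re, one_re, ofReal_re, ofReal_im, mul_zero, sub_zero, mul_im] at hre
  intro h0
  have hDre := congrArg re h0
  have hDim := congrArg im h0
  simp only [den, sq, ← hv, add_re, mul_re, ofReal_re, ofReal_im, mul_zero, sub_zero, I_re, I_im,
    mul_one, sub_self, mul_im, add_zero, zero_sub, mul_neg, zero_mul, zero_add, one_re, zero_re,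
    add_im, neg_zero, one_im, zero_im, mul_eq_zero] at hDre hDim
  rcases hDim with (rfl | rfl) | hvre
  · linarith
  · exact hℓ.ne' rfl
  · rw [hvre] at hre
    have hy2 : 0 < y * y := by nlinarith [mul_self_nonneg v.im]
    nlinarith [mul_nonneg (mul_nonneg hy hℓ.le) hvim, mul_lt_mul_of_pos_right hκτ hy2]

theorem continuousOn_root (κ : ℝ) : ContinuousOn (root κ) {s : ℂ | 0 ≤ s.re ∧ 0 ≤ s.im} := by
  refine continuousOn_sqrt_of_im_nonneg.comp (by fun_prop) fun s ⟨hre, him⟩ => ?_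
  simp only [Set.mem_ofPred_eq, pow_two, add_im, mul_im, mul_re, one_im, ofReal_re, ofReal_im]
  nlinarith [mul_nonneg hre him, mul_self_nonneg κ]

theorem apply_conj (hs : 0 < s.re) : Hhat κ τ ℓ (conj s) = conj (Hhat κ τ ℓ s) := by
  have hroot : root κ (conj s) = conj (root κ s) := by
    rw [root, root, ← sqrt_conj (mem_slitPlane_iff_arg.1 (one_add_sq_mul_sq_mem_slitPlane κ hs)).1]
    simp
  simp [eq_num_div_den, num, den, hroot]

theorem norm_root_le (κ : ℝ) (s : ℂ) : ‖root κ s‖ ≤ 1 + |κ| * ‖s‖ := by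
  rw [root, norm_sqrt]
  refine Real.sqrt_le_iff.2 ⟨by positivity, ?_⟩
  calc ‖1 + (κ : ℂ) ^ 2 * s ^ 2‖ ≤ 1 + κ ^ 2 * ‖s‖ ^ 2 :=
        (norm_add_le _ _).trans (by simp)
    _ ≤ (1 + |κ| * ‖s‖) ^ 2 := by nlinarith [mul_nonneg (abs_nonneg κ) (norm_nonneg s), sq_abs κ]

theorem norm_num_le (hℓ : 0 ≤ ℓ) (s : ℂ) :
    ‖num κ τ ℓ s‖ ≤ τ ^ 2 * ‖s‖ + ℓ * (1 + |κ| * ‖s‖) := by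
  refine (norm_add_le _ _).trans (add_le_add (by simp) ?_)
  rw [norm_mul, norm_real, Real.norm_of_nonneg hℓ]
  exact mul_le_mul_of_nonneg_left (norm_root_le κ s) hℓ

theorem sub_le_norm_den (hℓ : 0 ≤ ℓ) (s : ℂ) :
    τ ^ 2 * ‖s‖ ^ 2 - (‖s‖ * ℓ * (1 + |κ| * ‖s‖) + 1) ≤ ‖den κ τ ℓ s‖ := by
  have h := norm_sub_norm_le ((τ : ℂ) ^ 2 * s ^ 2) (-(s * ℓ * root κ s + 1))
  rw [sub_neg_eq_add, norm_neg, ← add_assoc] at h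
  refine le_trans (sub_le_sub (by simp) ?_) h
  refine (norm_add_le _ _).trans (add_le_add ?_ norm_one.le)
  rw [norm_mul, norm_mul, norm_real, Real.norm_of_nonneg hℓ]
  exact mul_le_mul_of_nonneg_left (norm_root_le κ s) (by positivity)

theorem exists_norm_le_div_norm (hℓ : 0 ≤ ℓ) (hℓκ : ℓ * |κ| < τ ^ 2) :
    ∃ C R : ℝ, 0 < R ∧ ∀ s : ℂ, R ≤ ‖s‖ → ‖Hhat κ τ ℓ s‖ ≤ C / ‖s‖ := by
  set a := τ ^ 2 - ℓ * |κ|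
  have ha : 0 < a := sub_pos.2 hℓκ
  refine ⟨2 * (τ ^ 2 + ℓ + ℓ * |κ|) / a, max 1 (2 * (ℓ + 1) / a), by positivity,
    fun s hR => ?_⟩
  set t := ‖s‖
  have ht : 1 ≤ t := (le_max_left _ _).trans hR
  have hat : 2 * (ℓ + 1) ≤ a * t := (div_le_iff₀' ha).1 ((le_max_right _ _).trans hR)
  have hden : a / 2 * t ^ 2 ≤ ‖den κ τ ℓ s‖ :=
    le_trans (by nlinarith) (sub_le_norm_den hℓ s)
  have hnum : ‖num κ τ ℓ s‖ ≤ (τ ^ 2 + ℓ + ℓ * |κ|) * t :=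
    (norm_num_le hℓ s).trans (by nlinarith [abs_nonneg κ])
  rw [eq_num_div_den, norm_div]
  calc ‖num κ τ ℓ s‖ / ‖den κ τ ℓ s‖
      ≤ (τ ^ 2 + ℓ + ℓ * |κ|) * t / (a / 2 * t ^ 2) :=
        div_le_div₀ (by positivity) hnum (by positivity) hden
    _ = 2 * (τ ^ 2 + ℓ + ℓ * |κ|) / a / t := by field_simp

theorem exists_norm_le_of_norm_le (hℓ : 0 < ℓ) (hκτ : κ ^ 2 < τ ^ 2) (R : ℝ) :
    ∃ B : ℝ, ∀ s : ℂ, 0 < s.re → ‖s‖ ≤ R → ‖Hhat κ τ ℓ s‖ ≤ B := by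
  -- `root` is continuous on the closed quadrant `Q` only (it jumps across its branch cut), so the
  -- fourth quadrant is reached through `Ĥ (conj s) = conj (Ĥ s)`
  set Q := {s : ℂ | 0 ≤ s.re ∧ 0 ≤ s.im}
  have hK : IsCompact (Metric.closedBall 0 R ∩ Q) :=
    (isCompact_closedBall 0 R).inter_right
      ((isClosed_le continuous_const continuous_re).inter
        (isClosed_le continuous_const continuous_im))
  have hden : ∀ s ∈ Metric.closedBall 0 R ∩ Q, den κ τ ℓ s ≠ 0 := by
    rintro s ⟨-, hre, him⟩
    rcases hre.lt_or_eq with hre | hre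
    · exact den_ne_zero_of_re_pos hℓ.le hre
    · rw [← re_add_im s, ← hre, ofReal_zero, zero_add]
      exact den_ofReal_mul_I_ne_zero hℓ hκτ him
  have hroot : ContinuousOn (root κ) (Metric.closedBall 0 R ∩ Q) :=
    (continuousOn_root κ).mono Set.inter_subset_right
  have hcont : ContinuousOn (Hhat κ τ ℓ) (Metric.closedBall 0 R ∩ Q) := by
    rw [eq_num_div_den]
    refine ContinuousOn.div ?_ ?_ hden
    · unfold num; fun_prop
    · unfold den; fun_prop
  obtain ⟨B, hB⟩ := hK.exists_bound_of_continuousOn hcont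
  refine ⟨B, fun s hs hsR => ?_⟩
  rcases le_total 0 s.im with him | him
  · exact hB s ⟨by simpa using hsR, hs.le, him⟩
  · rw [← norm_conj, ← apply_conj hs]
    exact hB _ ⟨by simpa using hsR, by simpa using hs.le, by simpa using him⟩

theorem exists_sq_norm_le_div_one_add_sq (hℓ : 0 < ℓ) (hκτ : κ ^ 2 < τ ^ 2)
    (hℓκ : ℓ * |κ| < τ ^ 2) :
    ∃ M : ℝ, 0 ≤ M ∧ ∀ s : ℂ, 0 < s.re → ‖Hhat κ τ ℓ s‖ ^ 2 ≤ M / (1 + ‖s‖ ^ 2) := by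
  obtain ⟨C, R, hR, hC⟩ := exists_norm_le_div_norm hℓ.le hℓκ
  obtain ⟨B, hB⟩ := exists_norm_le_of_norm_le hℓ hκτ R
  refine ⟨max (B ^ 2 * (1 + R ^ 2)) (C ^ 2 * (R⁻¹ ^ 2 + 1)), le_max_of_le_left (by positivity),
    fun s hs => ?_⟩
  rw [le_div_iff₀ (by positivity)]
  rcases le_total ‖s‖ R with hsR | hsR
  · refine le_trans ?_ (le_max_left _ _)
    have hHB := hB s hs hsR
    gcongr
  · refine le_trans ?_ (le_max_right _ _)
    have hs0 : 0 < ‖s‖ := hR.trans_le hsR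
    calc ‖Hhat κ τ ℓ s‖ ^ 2 * (1 + ‖s‖ ^ 2) ≤ (C / ‖s‖) ^ 2 * (1 + ‖s‖ ^ 2) := by
          gcongr
          exact hC s hsR
      _ = C ^ 2 * (‖s‖⁻¹ ^ 2 + 1) := by field_simp
      _ ≤ C ^ 2 * (R⁻¹ ^ 2 + 1) := by gcongr

end Hhat

theorem lintegral_ofReal_le_of_le_div_one_add_sq {f : ℝ → ℝ} {M : ℝ} (hM : 0 ≤ M)
    (hf : ∀ ξ, f ξ ≤ M / (1 + ξ ^ 2)) :
    ∫⁻ ξ, ENNReal.ofReal (f ξ) ≤ ENNReal.ofReal (M * Real.pi) := by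
  calc ∫⁻ ξ, ENNReal.ofReal (f ξ) ≤ ∫⁻ ξ : ℝ, ENNReal.ofReal (M * (1 + ξ ^ 2)⁻¹) :=
        lintegral_mono fun ξ => ENNReal.ofReal_le_ofReal (hf ξ)
    _ = ENNReal.ofReal (∫ ξ : ℝ, M * (1 + ξ ^ 2)⁻¹) :=
        (ofReal_integral_eq_lintegral_ofReal (integrable_inv_one_add_sq.const_mul M)
          (.of_forall fun ξ => by positivity)).symm
    _ = ENNReal.ofReal (M * Real.pi) := by rw [integral_const_mul, integral_univ_inv_one_add_sq]

theorem stmt11_general (κ τ ℓ : ℝ) (hℓ : 0 < ℓ)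
    (h : κ ^ 2 + ℓ ^ 2 / 3 < τ ^ 2) :
    DifferentiableOn ℂ (Hhat κ τ ℓ) {s : ℂ | 0 < s.re} ∧
    ∃ M : ℝ, ∀ α : ℝ, 0 < α →
      (∫⁻ ξ : ℝ, ENNReal.ofReal (‖Hhat κ τ ℓ ((α : ℂ) + (ξ : ℂ) * Complex.I)‖ ^ 2))
        ≤ ENNReal.ofReal M := by
  have hκτ : κ ^ 2 < τ ^ 2 := by nlinarith
  have hℓκ : ℓ * |κ| < τ ^ 2 := by nlinarith [sq_nonneg (|κ| - ℓ / 2), sq_abs κ]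
  obtain ⟨M, hM, hHM⟩ := Hhat.exists_sq_norm_le_div_one_add_sq hℓ hκτ hℓκ
  refine ⟨Hhat.differentiableOn hℓ.le, M * Real.pi, fun α hα =>
    lintegral_ofReal_le_of_le_div_one_add_sq hM fun ξ => ?_⟩
  have hre : 0 < ((α : ℂ) + ξ * I).re := by simpa using hα
  refine (hHM _ hre).trans (div_le_div_of_nonneg_left hM (by positivity) ?_)
  rw [← normSq_eq_norm_sq, normSq_add_mul_I]
  nlinarith

/-- `Ĥ` belongs to the Hardy space `H²(ℂ₀)`: it is holomorphic on the right half-plane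
and its `L²` norms on vertical lines are uniformly bounded. -/
theorem stmt11 (κ τ ℓ : ℝ) (hκ : 0 < κ) (hτ : 0 < τ) (hℓ : 0 < ℓ)
    (h : κ ^ 2 + ℓ ^ 2 / 3 < τ ^ 2) :
    DifferentiableOn ℂ (Hhat κ τ ℓ) {s : ℂ | 0 < s.re} ∧
    ∃ M : ℝ, ∀ α : ℝ, 0 < α →
      (∫⁻ ξ : ℝ, ENNReal.ofReal (‖Hhat κ τ ℓ ((α : ℂ) + (ξ : ℂ) * Complex.I)‖ ^ 2))
        ≤ ENNReal.ofReal M :=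
  stmt11_general κ τ ℓ hℓ h
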